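/- arXiv:2603.12137 — 2 statements merged into one kernel-verified Lean document; each statement's English description precedes it below -/
import Mathlib

section
/- (Linear convergence under repeated perfect prediction.) Suppose α_i < 1 for at least one i and β_i < 1 for every i, and let x_PS be the limit of the perfect-prediction dynamics. Then for every c with max_i β_i < c < 1 there exists a constant C > 0 such that ‖x^{(T)} − x_PS‖₂ ≤ C c^T for all T ≥ 0; that is, the dynamics converge to x_PS at a linear rate governed by max_i β_i. -/
open Matrix Filter Topology

/-- Row-normalized adjacency matrix `W = deg⁻¹ A` of a simple graph. -/
noncomputable def rowNormAdj {n : ℕ} (G : SimpleGraph (Fin n)) [DecidableRel G.Adj] :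
    Matrix (Fin n) (Fin n) ℝ :=
  Matrix.of fun i j => (G.adjMatrix ℝ) i j / (G.degree i : ℝ)

/-- The multi-step influence matrix
`Ψ_K = Σ_{k=0}^{K−1} (Λ_α W)^k (I − Λ_α) + (Λ_α W)^K`. -/
noncomputable def Psi {n : ℕ} (K : ℕ) (α : Fin n → ℝ) (W : Matrix (Fin n) (Fin n) ℝ) :
    Matrix (Fin n) (Fin n) ℝ :=
  (∑ k ∈ Finset.range K, (Matrix.diagonal α * W) ^ k * (1 - Matrix.diagonal α))
    + (Matrix.diagonal α * W) ^ K

/-!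
Unrolling one influence step gives `Ψ_{K+1} = (I - Λ_α) + Λ_α W Ψ_K`, so each coordinate of
`Ψ_{K+1} v` is a convex combination of `v_i` and a coordinate of `W Ψ_K v`; as `W` is
substochastic, induction on `K` shows that every `Ψ_K` is nonexpansive for the sup norm. The
update `v ↦ Ψ_K ((I - Λ_β) x* + Λ_β v)` is therefore `max_i β_i`-Lipschitz for the sup norm,
`x_PS` is its fixed point by continuity, and the error decays like `(max_i β_i)^T`. Passing to
the Euclidean norm costs a factor `√n`.
-/

section SupNorm

variable {ι κ : Type*} [Fintype ι] [Fintype κ]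

theorem Matrix.norm_mulVec_le_of_sum_abs_le_one {A : Matrix ι κ ℝ}
    (hA : ∀ i, ∑ j, |A i j| ≤ 1) (v : κ → ℝ) : ‖A *ᵥ v‖ ≤ ‖v‖ := by
  refine (pi_norm_le_iff_of_nonneg (norm_nonneg v)).2 fun i => ?_
  calc ‖(A *ᵥ v) i‖ ≤ ∑ j, |A i j| * ‖v j‖ := by
        simpa only [mulVec, dotProduct, Real.norm_eq_abs, abs_mul]
          using Finset.abs_sum_le_sum_abs (fun j => A i j * v j) Finset.univ
    _ ≤ ∑ j, |A i j| * ‖v‖ := by gcongr with j _; exact norm_le_pi_norm v j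
    _ ≤ ‖v‖ := by
        rw [← Finset.sum_mul]
        exact mul_le_of_le_one_left (norm_nonneg v) (hA i)

theorem Matrix.norm_diagonal_mulVec_le [DecidableEq ι] (d v : ι → ℝ) :
    ‖diagonal d *ᵥ v‖ ≤ ‖d‖ * ‖v‖ := by
  have : diagonal d *ᵥ v = d * v := funext (mulVec_diagonal d v)
  rw [this]
  exact norm_mul_le d v

theorem sqrt_sum_sq_le_sqrt_card_mul_norm (v : ι → ℝ) :
    √(∑ i, v i ^ 2) ≤ √(Fintype.card ι) * ‖v‖ := by
  rw [← Real.sqrt_sq (norm_nonneg v), ← Real.sqrt_mul (Nat.cast_nonneg _)]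
  refine Real.sqrt_le_sqrt ?_
  calc ∑ i, v i ^ 2 ≤ ∑ _i : ι, ‖v‖ ^ 2 := by
        refine Finset.sum_le_sum fun i _ => ?_
        rw [← sq_abs, ← Real.norm_eq_abs]
        gcongr
        exact norm_le_pi_norm v i
    _ = Fintype.card ι * ‖v‖ ^ 2 := by simp

end SupNorm

theorem norm_iterate_sub_le_pow_mul {E : Type*} [SeminormedAddGroup E] {f : E → E} {c : ℝ}
    (hc : 0 ≤ c) (hf : ∀ u v, ‖f u - f v‖ ≤ c * ‖u - v‖) {y : E} (hy : Function.IsFixedPt f y)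
    (x : E) (T : ℕ) : ‖f^[T] x - y‖ ≤ c ^ T * ‖x - y‖ := by
  induction T with
  | zero => simp
  | succ T ih =>
    calc ‖f^[T + 1] x - y‖ = ‖f (f^[T] x) - f y‖ := by
          rw [Function.iterate_succ_apply', hy.eq]
      _ ≤ c * (c ^ T * ‖x - y‖) := (hf _ _).trans (mul_le_mul_of_nonneg_left ih hc)
      _ = c ^ (T + 1) * ‖x - y‖ := by ring

theorem rowNormAdj_sum_abs_le_one {n : ℕ} (G : SimpleGraph (Fin n)) [DecidableRel G.Adj]
    (i : Fin n) : ∑ j, |rowNormAdj G i j| ≤ 1 := by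
  have hdeg : ∑ j, G.adjMatrix ℝ i j = G.degree i := by
    simpa [mulVec, dotProduct] using
      G.adjMatrix_mulVec_const_apply (α := ℝ) (a := 1) (v := i)
  calc ∑ j, |rowNormAdj G i j| = ∑ j, G.adjMatrix ℝ i j / G.degree i := by
        refine Finset.sum_congr rfl fun j _ => abs_of_nonneg ?_
        simp only [rowNormAdj, of_apply, SimpleGraph.adjMatrix_apply]
        split_ifs <;> positivity
    _ ≤ 1 := by rw [← Finset.sum_div, hdeg]; exact div_self_le_one _

noncomputable def predictionUpdate {n : ℕ} (K : ℕ) (α β : Fin n → ℝ)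
    (W : Matrix (Fin n) (Fin n) ℝ) (xstar v : Fin n → ℝ) : Fin n → ℝ :=
  Psi K α W *ᵥ ((1 - diagonal β) *ᵥ xstar + diagonal β *ᵥ v)

section Psi

variable {n : ℕ} {α : Fin n → ℝ} {W : Matrix (Fin n) (Fin n) ℝ}

theorem Psi_zero : Psi 0 α W = 1 := by simp [Psi]

theorem Psi_succ (K : ℕ) :
    Psi (K + 1) α W = (1 - diagonal α) + diagonal α * W * Psi K α W := by
  simp only [Psi, Finset.sum_range_succ', pow_succ', pow_zero, one_mul, mul_add, Finset.mul_sum,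
    mul_assoc]
  abel

theorem norm_Psi_mulVec_le (hα : ∀ i, α i ∈ Set.Icc (0 : ℝ) 1)
    (hW : ∀ v, ‖W *ᵥ v‖ ≤ ‖v‖) (K : ℕ) (v : Fin n → ℝ) : ‖Psi K α W *ᵥ v‖ ≤ ‖v‖ := by
  induction K with
  | zero => simp [Psi_zero]
  | succ K ih =>
    refine (pi_norm_le_iff_of_nonneg (norm_nonneg v)).2 fun i => ?_
    obtain ⟨hα0, hα1⟩ := hα i
    have hcoord : (Psi (K + 1) α W *ᵥ v) i
        = (1 - α i) * v i + α i * (W *ᵥ (Psi K α W *ᵥ v)) i := by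
      simp only [Psi_succ, add_mulVec, sub_mulVec, one_mulVec, ← mulVec_mulVec, Pi.add_apply,
        Pi.sub_apply, mulVec_diagonal]
      ring
    calc ‖(Psi (K + 1) α W *ᵥ v) i‖
        ≤ (1 - α i) * ‖v i‖ + α i * ‖(W *ᵥ (Psi K α W *ᵥ v)) i‖ := by
          rw [hcoord]
          refine (norm_add_le _ _).trans_eq ?_
          rw [norm_mul, norm_mul, Real.norm_of_nonneg (sub_nonneg.2 hα1),
            Real.norm_of_nonneg hα0]
      _ ≤ (1 - α i) * ‖v‖ + α i * ‖v‖ := by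
          gcongr
          · exact norm_le_pi_norm v i
          · exact (norm_le_pi_norm _ i).trans ((hW _).trans ih)
      _ = ‖v‖ := by ring

theorem norm_predictionUpdate_sub_le (hα : ∀ i, α i ∈ Set.Icc (0 : ℝ) 1)
    (hW : ∀ v, ‖W *ᵥ v‖ ≤ ‖v‖) (K : ℕ) (β xstar u v : Fin n → ℝ) :
    ‖predictionUpdate K α β W xstar u - predictionUpdate K α β W xstar v‖ ≤ ‖β‖ * ‖u - v‖ :=
  calc ‖predictionUpdate K α β W xstar u - predictionUpdate K α β W xstar v‖
      = ‖Psi K α W *ᵥ (diagonal β *ᵥ (u - v))‖ := by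
        simp only [predictionUpdate, ← mulVec_sub, add_sub_add_left_eq_sub]
    _ ≤ ‖diagonal β *ᵥ (u - v)‖ := norm_Psi_mulVec_le hα hW K _
    _ ≤ ‖β‖ * ‖u - v‖ := norm_diagonal_mulVec_le β _

end Psi

theorem linear_convergence_perfect_prediction_general {n : ℕ}
    (G : SimpleGraph (Fin n)) [DecidableRel G.Adj]
    (K : ℕ)
    (α β : Fin n → ℝ) (hα : ∀ i, α i ∈ Set.Icc (0 : ℝ) 1)
    (hβ : ∀ i, β i ∈ Set.Icc (0 : ℝ) 1)
    (xstar : Fin n → ℝ)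
    (x : ℕ → Fin n → ℝ)
    (hrec : ∀ t, x (t + 1) = (Psi K α (rowNormAdj G)) *ᵥ
      ((1 - Matrix.diagonal β) *ᵥ xstar + (Matrix.diagonal β) *ᵥ x t))
    (xPS : Fin n → ℝ) (hlim : Tendsto x atTop (𝓝 xPS)) :
    ∀ c : ℝ, (⨆ i, β i) < c → c < 1 →
      ∃ C : ℝ, 0 < C ∧ ∀ T : ℕ,
        Real.sqrt (∑ i, (x T i - xPS i) ^ 2) ≤ C * c ^ T := by
  intro c hc _
  set f := predictionUpdate K α β (rowNormAdj G) xstar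
  have hx_iter : ∀ t, x t = f^[t] (x 0) := fun t => by
    induction t with
    | zero => rfl
    | succ t ih => rw [Function.iterate_succ_apply', ← ih, hrec]; rfl
  have hfix : Function.IsFixedPt f xPS :=
    isFixedPt_of_tendsto_iterate (hlim.congr hx_iter)
      (by unfold f predictionUpdate; fun_prop : Continuous f).continuousAt
  have hβc : ‖β‖ ≤ c := by
    refine (pi_norm_le_iff_of_nonneg ((Real.iSup_nonneg fun i => (hβ i).1).trans hc.le)).2
      fun i => ?_
    rw [Real.norm_of_nonneg (hβ i).1]
    exact (le_ciSup (Set.finite_range β).bddAbove i).trans hc.le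
  have hc0 : 0 ≤ c := (norm_nonneg β).trans hβc
  have hstep (u v : Fin n → ℝ) : ‖f u - f v‖ ≤ c * ‖u - v‖ :=
    (norm_predictionUpdate_sub_le hα
      (norm_mulVec_le_of_sum_abs_le_one (rowNormAdj_sum_abs_le_one G)) K β xstar u v).trans
      (by gcongr)
  refine ⟨√n * ‖x 0 - xPS‖ + 1, by positivity, fun T => ?_⟩
  calc √(∑ i, (x T i - xPS i) ^ 2) ≤ √n * ‖x T - xPS‖ := by
        simpa using sqrt_sum_sq_le_sqrt_card_mul_norm (x T - xPS)
    _ ≤ √n * (c ^ T * ‖x 0 - xPS‖) := by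
        rw [hx_iter T]
        gcongr
        exact norm_iterate_sub_le_pow_mul hc0 hstep hfix _ T
    _ ≤ (√n * ‖x 0 - xPS‖ + 1) * c ^ T := by nlinarith [pow_nonneg hc0 T]

/-- linear convergence under repeated perfect prediction.  If
`β_i < 1` for every `i` and `x_PS` is the limit of the dynamics, then for any
`max_i β_i < c < 1` there is `C > 0` with `‖x^{(T)} − x_PS‖₂ ≤ C c^T`. -/
theorem linear_convergence_perfect_prediction {n : ℕ} (hn : 2 ≤ n)
    (G : SimpleGraph (Fin n)) [DecidableRel G.Adj] (hG : G.Connected)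
    (K : ℕ) (hK : 1 ≤ K)
    (α β : Fin n → ℝ) (hα : ∀ i, α i ∈ Set.Icc (0 : ℝ) 1)
    (hβ : ∀ i, β i ∈ Set.Icc (0 : ℝ) 1)
    (hα1 : ∃ i, α i < 1) (hβ1 : ∀ i, β i < 1)
    (xstar : Fin n → ℝ) (hx : ∀ i, xstar i ∈ Set.Icc (0 : ℝ) 1)
    (x : ℕ → Fin n → ℝ) (hx0 : x 0 = xstar)
    (hrec : ∀ t, x (t + 1) = (Psi K α (rowNormAdj G)) *ᵥ
      ((1 - Matrix.diagonal β) *ᵥ xstar + (Matrix.diagonal β) *ᵥ x t))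
    (xPS : Fin n → ℝ) (hlim : Tendsto x atTop (𝓝 xPS)) :
    ∀ c : ℝ, (⨆ i, β i) < c → c < 1 →
      ∃ C : ℝ, 0 < C ∧ ∀ T : ℕ,
        Real.sqrt (∑ i, (x T i - xPS i) ^ 2) ≤ C * c ^ T :=
  linear_convergence_perfect_prediction_general G K α β hα hβ xstar x hrec xPS hlim
end

section
/- (Primitivity of the multi-step influence matrix.) Suppose α_i ∈ (0,1) for every i ∈ {1,…,n}. Then for every integer K ≥ 1 the matrix Ψ_K = Σ_{k=0}^{K−1} (Λ_α W)^k (I − Λ_α) + (Λ_α W)^K is primitive, and the matrix Ψ_∞ = Σ_{k=0}^{∞} (Λ_α W)^k (I − Λ_α) is primitive. -/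
open Matrix Filter Topology

/-- A nonnegative square matrix is irreducible: for every pair `(i,j)` some
power has a strictly positive `(i,j)` entry. -/
def IsIrreducibleMat {n : ℕ} (M : Matrix (Fin n) (Fin n) ℝ) : Prop :=
  ∀ i j, ∃ m : ℕ, 1 ≤ m ∧ 0 < (M ^ m) i j

/-- A nonnegative square matrix is primitive: some power is entrywise strictly
positive. -/
def IsPrimitiveMat {n : ℕ} (M : Matrix (Fin n) (Fin n) ℝ) : Prop :=
  ∃ m : ℕ, 1 ≤ m ∧ ∀ i j, 0 < (M ^ m) i j

/-- The infinite-horizon influence matrix `Ψ_∞ = Σ_{k=0}^∞ (Λ_α W)^k (I − Λ_α)`. -/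
noncomputable def PsiInf {n : ℕ} (α : Fin n → ℝ) (W : Matrix (Fin n) (Fin n) ℝ) :
    Matrix (Fin n) (Fin n) ℝ :=
  ∑' k : ℕ, (Matrix.diagonal α * W) ^ k * (1 - Matrix.diagonal α)

/-!
`Ψ_K` (for `K ≥ 1`) and `Ψ_∞` are entrywise nonnegative, have a positive diagonal (the term
`I − Λ_α`, as `α_i < 1`) and are positive on every edge of `G` (the term `Λ_α W`, as `α_i > 0`).
For such a matrix `N`, the entry `(N ^ m) i j` is at least the product of the diagonal entries
at `i` and the entries along a path from `i` to `j`, padded with loops at `i` to length `m`;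
as paths have fewer than `n` edges, `N ^ n` is entrywise positive. The series `Ψ_∞` converges
because `‖Λ_α W‖ ≤ max_i α_i < 1` in the `ℓ^∞` operator norm.
-/

namespace Matrix

variable {ι R : Type*} [Fintype ι] [Semiring R] [PartialOrder R] [IsStrictOrderedRing R]
  {A : Matrix ι ι R}

theorem mul_apply_pos_of_nonneg {B : Matrix ι ι R} (hA : ∀ i j, 0 ≤ A i j)
    (hB : ∀ i j, 0 ≤ B i j) {i j : ι} (k : ι) (hik : 0 < A i k) (hkj : 0 < B k j) :
    0 < (A * B) i j :=
  Finset.sum_pos' (fun c _ => mul_nonneg (hA i c) (hB c j)) ⟨k, Finset.mem_univ k, mul_pos hik hkj⟩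

variable [DecidableEq ι]

theorem pow_apply_self_pos (hA : ∀ i j, 0 ≤ A i j) (hdiag : ∀ i, 0 < A i i) (m : ℕ) (i : ι) :
    0 < (A ^ m) i i := by
  induction m with
  | zero => simp
  | succ m ih =>
    rw [pow_succ]
    exact mul_apply_pos_of_nonneg (pow_apply_nonneg hA m) hA i ih (hdiag i)

theorem pow_length_apply_pos {G : SimpleGraph ι} (hA : ∀ i j, 0 ≤ A i j)
    (hadj : ∀ i j, G.Adj i j → 0 < A i j) {i j : ι} (p : G.Walk i j) :
    0 < (A ^ p.length) i j := by
  induction p with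
  | nil => simp
  | @cons u v w huv q ih =>
    rw [SimpleGraph.Walk.length_cons, pow_succ']
    exact mul_apply_pos_of_nonneg hA (pow_apply_nonneg hA _) v (hadj u v huv) ih

theorem pow_apply_pos_of_connected {G : SimpleGraph ι} (hG : G.Connected)
    (hA : ∀ i j, 0 ≤ A i j) (hdiag : ∀ i, 0 < A i i) (hadj : ∀ i j, G.Adj i j → 0 < A i j)
    {m : ℕ} (hm : Fintype.card ι ≤ m + 1) (i j : ι) : 0 < (A ^ m) i j := by
  obtain ⟨p, hp⟩ := (hG.preconnected i j).exists_isPath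
  have hlen : p.length ≤ m := by have := hp.length_lt; omega
  rw [← Nat.sub_add_cancel hlen, pow_add]
  exact mul_apply_pos_of_nonneg (pow_apply_nonneg hA _) (pow_apply_nonneg hA _) i
    (pow_apply_self_pos hA hdiag _ i) (pow_length_apply_pos hA hadj p)

end Matrix

theorem isPrimitiveMat_of_connected {n : ℕ} {G : SimpleGraph (Fin n)} (hG : G.Connected)
    {A : Matrix (Fin n) (Fin n) ℝ} (hA : ∀ i j, 0 ≤ A i j) (hdiag : ∀ i, 0 < A i i)
    (hadj : ∀ i j, G.Adj i j → 0 < A i j) : IsPrimitiveMat A :=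
  ⟨n, Fin.pos_iff_nonempty.mpr hG.nonempty,
    pow_apply_pos_of_connected hG hA hdiag hadj (by simp)⟩

theorem rowNormAdj_nonneg {n : ℕ} (G : SimpleGraph (Fin n)) [DecidableRel G.Adj] (i j : Fin n) :
    0 ≤ rowNormAdj G i j := by
  simp only [rowNormAdj, of_apply, SimpleGraph.adjMatrix_apply]
  positivity

theorem rowNormAdj_pos {n : ℕ} {G : SimpleGraph (Fin n)} [DecidableRel G.Adj] {i j : Fin n}
    (h : G.Adj i j) : 0 < rowNormAdj G i j := by
  have : 0 < G.degree i := G.degree_pos_iff_exists_adj i |>.mpr ⟨j, h⟩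
  simp only [rowNormAdj, of_apply, SimpleGraph.adjMatrix_apply, if_pos h]
  positivity

theorem sum_rowNormAdj_le_one {n : ℕ} (G : SimpleGraph (Fin n)) [DecidableRel G.Adj]
    (i : Fin n) : ∑ j, rowNormAdj G i j ≤ 1 := by
  have hdeg : ∑ j, G.adjMatrix ℝ i j = G.degree i := by
    simpa [mulVec, dotProduct] using G.adjMatrix_mulVec_const_apply (α := ℝ) (a := 1) (v := i)
  simp only [rowNormAdj, of_apply, ← Finset.sum_div, hdeg]
  -- `d_i / d_i` is `0` rather than `1` at an isolated vertex
  exact div_self_le_one _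

noncomputable def influenceTerm {n : ℕ} (α : Fin n → ℝ) (W : Matrix (Fin n) (Fin n) ℝ) (k : ℕ) :
    Matrix (Fin n) (Fin n) ℝ :=
  (diagonal α * W) ^ k * (1 - diagonal α)

section Influence

variable {n : ℕ} {α : Fin n → ℝ} {W : Matrix (Fin n) (Fin n) ℝ}

theorem diagonal_mul_apply_nonneg (hα : ∀ i, α i ∈ Set.Ioo (0 : ℝ) 1) (hW : ∀ i j, 0 ≤ W i j)
    (i j : Fin n) : 0 ≤ (diagonal α * W) i j := by
  rw [diagonal_mul]
  exact mul_nonneg (hα i).1.le (hW i j)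

theorem diagonal_mul_apply_pos (hα : ∀ i, α i ∈ Set.Ioo (0 : ℝ) 1) {i j : Fin n}
    (hij : 0 < W i j) : 0 < (diagonal α * W) i j := by
  rw [diagonal_mul]
  exact mul_pos (hα i).1 hij

theorem influenceTerm_apply (k : ℕ) (i j : Fin n) :
    influenceTerm α W k i j = ((diagonal α * W) ^ k) i j * (1 - α j) := by
  rw [influenceTerm, ← diagonal_one, diagonal_sub, mul_diagonal]

theorem influenceTerm_apply_nonneg (hα : ∀ i, α i ∈ Set.Ioo (0 : ℝ) 1)
    (hW : ∀ i j, 0 ≤ W i j) (k : ℕ) (i j : Fin n) : 0 ≤ influenceTerm α W k i j := by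
  rw [influenceTerm_apply]
  exact mul_nonneg (pow_apply_nonneg (diagonal_mul_apply_nonneg hα hW) k i j)
    (sub_nonneg.2 (hα j).2.le)

theorem influenceTerm_zero_apply_self_pos (hα : ∀ i, α i ∈ Set.Ioo (0 : ℝ) 1) (i : Fin n) :
    0 < influenceTerm α W 0 i i := by
  simp [influenceTerm_apply, (hα i).2]

theorem influenceTerm_one_apply_pos (hα : ∀ i, α i ∈ Set.Ioo (0 : ℝ) 1) {i j : Fin n}
    (hij : 0 < W i j) : 0 < influenceTerm α W 1 i j := by
  rw [influenceTerm_apply, pow_one]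
  exact mul_pos (diagonal_mul_apply_pos hα hij) (sub_pos.2 (hα j).2)

theorem Psi_apply (K : ℕ) (i j : Fin n) :
    Psi K α W i j = ∑ k ∈ Finset.range K, influenceTerm α W k i j + ((diagonal α * W) ^ K) i j := by
  simp only [Psi, Matrix.add_apply, Matrix.sum_apply, influenceTerm]

theorem influenceTerm_apply_le_Psi_apply (hα : ∀ i, α i ∈ Set.Ioo (0 : ℝ) 1)
    (hW : ∀ i j, 0 ≤ W i j) {k K : ℕ} (hk : k < K) (i j : Fin n) :
    influenceTerm α W k i j ≤ Psi K α W i j := by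
  rw [Psi_apply]
  exact le_add_of_le_of_nonneg
    (Finset.single_le_sum (fun k _ => influenceTerm_apply_nonneg hα hW k i j)
      (Finset.mem_range.2 hk))
    (pow_apply_nonneg (diagonal_mul_apply_nonneg hα hW) K i j)

theorem Psi_apply_nonneg (hα : ∀ i, α i ∈ Set.Ioo (0 : ℝ) 1) (hW : ∀ i j, 0 ≤ W i j)
    (K : ℕ) (i j : Fin n) : 0 ≤ Psi K α W i j := by
  rw [Psi_apply]
  exact add_nonneg (Finset.sum_nonneg fun k _ => influenceTerm_apply_nonneg hα hW k i j)
    (pow_apply_nonneg (diagonal_mul_apply_nonneg hα hW) K i j)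

theorem Psi_apply_self_pos (hα : ∀ i, α i ∈ Set.Ioo (0 : ℝ) 1) (hW : ∀ i j, 0 ≤ W i j)
    {K : ℕ} (hK : 1 ≤ K) (i : Fin n) : 0 < Psi K α W i i :=
  (influenceTerm_zero_apply_self_pos hα i).trans_le (influenceTerm_apply_le_Psi_apply hα hW hK i i)

theorem Psi_apply_pos (hα : ∀ i, α i ∈ Set.Ioo (0 : ℝ) 1) (hW : ∀ i j, 0 ≤ W i j)
    {K : ℕ} (hK : 1 ≤ K) {i j : Fin n} (hij : 0 < W i j) : 0 < Psi K α W i j := by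
  obtain rfl | hK := hK.eq_or_lt
  · rw [Psi_apply, pow_one]
    exact add_pos_of_nonneg_of_pos
      (Finset.sum_nonneg fun k _ => influenceTerm_apply_nonneg hα hW k i j)
      (diagonal_mul_apply_pos hα hij)
  · exact (influenceTerm_one_apply_pos hα hij).trans_le
      (influenceTerm_apply_le_Psi_apply hα hW hK i j)

section NeumannSeries

attribute [local instance] Matrix.linftyOpNormedAddCommGroup Matrix.linftyOpNormedRing
  Matrix.linftyOpNormedSpace

theorem linfty_opNorm_le_one_of_sum_le_one (hW : ∀ i j, 0 ≤ W i j)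
    (hrow : ∀ i, ∑ j, W i j ≤ 1) : ‖W‖ ≤ 1 := by
  rw [linfty_opNorm_def, NNReal.coe_le_one]
  refine Finset.sup_le fun i _ => ?_
  rw [← NNReal.coe_le_coe]
  push_cast
  simpa only [Real.norm_of_nonneg (hW i _)] using hrow i

theorem summable_influenceTerm (hα : ∀ i, α i ∈ Set.Ioo (0 : ℝ) 1) (hW : ∀ i j, 0 ≤ W i j)
    (hrow : ∀ i, ∑ j, W i j ≤ 1) : Summable (influenceTerm α W) := by
  have hα_norm : ‖α‖ < 1 := (pi_norm_lt_iff one_pos).2 fun i => by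
    rw [Real.norm_of_nonneg (hα i).1.le]
    exact (hα i).2
  have hnorm : ‖diagonal α * W‖ < 1 := calc
    ‖diagonal α * W‖ ≤ ‖α‖ * ‖W‖ := linfty_opNorm_diagonal α ▸ linfty_opNorm_mul _ _
    _ ≤ ‖α‖ * 1 := by gcongr; exact linfty_opNorm_le_one_of_sum_le_one hW hrow
    _ < 1 := by rwa [mul_one]
  -- instance search only finds completeness for the product uniformity, not the norm's
  have := FiniteDimensional.complete ℝ (Matrix (Fin n) (Fin n) ℝ)
  exact (summable_geometric_of_norm_lt_one hnorm).mul_right _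

end NeumannSeries

theorem PsiInf_apply (hα : ∀ i, α i ∈ Set.Ioo (0 : ℝ) 1) (hW : ∀ i j, 0 ≤ W i j)
    (hrow : ∀ i, ∑ j, W i j ≤ 1) (i j : Fin n) :
    PsiInf α W i j = ∑' k, influenceTerm α W k i j := by
  have hs := summable_influenceTerm hα hW hrow
  exact (congrFun (tsum_apply hs) j).trans (tsum_apply (Pi.summable.1 hs i))

theorem influenceTerm_apply_le_PsiInf_apply (hα : ∀ i, α i ∈ Set.Ioo (0 : ℝ) 1)
    (hW : ∀ i j, 0 ≤ W i j) (hrow : ∀ i, ∑ j, W i j ≤ 1) (k : ℕ) (i j : Fin n) :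
    influenceTerm α W k i j ≤ PsiInf α W i j := by
  have hs := Pi.summable.1 (Pi.summable.1 (summable_influenceTerm hα hW hrow) i) j
  rw [PsiInf_apply hα hW hrow]
  exact hs.le_tsum k fun k _ => influenceTerm_apply_nonneg hα hW k i j

theorem PsiInf_apply_nonneg (hα : ∀ i, α i ∈ Set.Ioo (0 : ℝ) 1) (hW : ∀ i j, 0 ≤ W i j)
    (hrow : ∀ i, ∑ j, W i j ≤ 1) (i j : Fin n) : 0 ≤ PsiInf α W i j :=
  (influenceTerm_apply_nonneg hα hW 0 i j).trans
    (influenceTerm_apply_le_PsiInf_apply hα hW hrow 0 i j)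

theorem PsiInf_apply_self_pos (hα : ∀ i, α i ∈ Set.Ioo (0 : ℝ) 1) (hW : ∀ i j, 0 ≤ W i j)
    (hrow : ∀ i, ∑ j, W i j ≤ 1) (i : Fin n) : 0 < PsiInf α W i i :=
  (influenceTerm_zero_apply_self_pos hα i).trans_le
    (influenceTerm_apply_le_PsiInf_apply hα hW hrow 0 i i)

theorem PsiInf_apply_pos (hα : ∀ i, α i ∈ Set.Ioo (0 : ℝ) 1) (hW : ∀ i j, 0 ≤ W i j)
    (hrow : ∀ i, ∑ j, W i j ≤ 1) {i j : Fin n} (hij : 0 < W i j) : 0 < PsiInf α W i j :=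
  (influenceTerm_one_apply_pos hα hij).trans_le
    (influenceTerm_apply_le_PsiInf_apply hα hW hrow 1 i j)

end Influence

theorem psi_primitive_general {n : ℕ} (G : SimpleGraph (Fin n))
    [DecidableRel G.Adj] (hG : G.Connected)
    (α : Fin n → ℝ) (hα : ∀ i, α i ∈ Set.Ioo (0 : ℝ) 1) :
    (∀ K : ℕ, 1 ≤ K → IsPrimitiveMat (Psi K α (rowNormAdj G))) ∧
      IsPrimitiveMat (PsiInf α (rowNormAdj G)) := by
  have hW := rowNormAdj_nonneg G
  have hrow := sum_rowNormAdj_le_one G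
  refine ⟨fun K hK => ?_, ?_⟩
  · exact isPrimitiveMat_of_connected hG (Psi_apply_nonneg hα hW K)
      (Psi_apply_self_pos hα hW hK) fun _ _ h => Psi_apply_pos hα hW hK (rowNormAdj_pos h)
  · exact isPrimitiveMat_of_connected hG (PsiInf_apply_nonneg hα hW hrow)
      (PsiInf_apply_self_pos hα hW hrow) fun _ _ h => PsiInf_apply_pos hα hW hrow (rowNormAdj_pos h)

/-- primitivity of the multi-step influence matrix.  If
`α_i ∈ (0,1)` for every `i`, then `Ψ_K` is primitive for every `K ≥ 1`, and
`Ψ_∞` is primitive. -/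
theorem psi_primitive {n : ℕ} (hn : 2 ≤ n) (G : SimpleGraph (Fin n))
    [DecidableRel G.Adj] (hG : G.Connected)
    (α : Fin n → ℝ) (hα : ∀ i, α i ∈ Set.Ioo (0 : ℝ) 1) :
    (∀ K : ℕ, 1 ≤ K → IsPrimitiveMat (Psi K α (rowNormAdj G))) ∧
      IsPrimitiveMat (PsiInf α (rowNormAdj G)) :=
  psi_primitive_general G hG α hα
end
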